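/- Let E be a real Banach space, let T₁ = [0,a] and T₂ = [0,b] be compact real intervals, and let H ⊆ C(T₁ × T₂, E) be a bounded family of functions that is (strongly) equicontinuous. Let H(x,y) = {h(x,y) : h ∈ H} for (x,y) ∈ T₁ × T₂, and let H(T₁×T₂) = ⋃_{(x,y)} H(x,y). Then β(H(T₁×T₂)) = sup{β(H(x,y)) : (x,y) ∈ T₁ × T₂}, where β is the De Blasi measure of weak noncompactness on E. -/

import Mathlib

open Metric Set Pointwise

/-- Weakly compact subset of a normed space: compact in the weak topology. -/
def IsWeaklyCompact {E : Type*} [NormedAddCommGroup E] [NormedSpace ℝ E] (C : Set E) : Prop :=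
  IsCompact (toWeakSpace ℝ E '' C)

/-- De Blasi measure of weak noncompactness. -/
noncomputable def deBlasi {E : Type*} [NormedAddCommGroup E] [NormedSpace ℝ E]
    (A : Set E) : ℝ :=
  sInf {t : ℝ | 0 < t ∧ ∃ C : Set E, IsWeaklyCompact C ∧
    A ⊆ C + t • Metric.closedBall (0 : E) 1}

/-! Fix `ε > 0` and let `S` be the supremum of the pointwise values `β(H(p))`. Equicontinuity
gives `δ` such that every `h(p)` lies within `ε / 2` of `h(q)` for some point `q` of a finite
`δ`-net of the compact domain `K`. Each `H(q)` lies in `C_q + (S + ε / 2)B₁` with `C_q` weakly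
compact, so `H(K)` lies in `(⋃_q C_q) + (S + ε)B₁`, and a finite union of weakly compact sets is weakly
compact. The reverse inequality is monotonicity of `β`. -/

open Bornology

lemma mem_add_closedBall_of_dist_le {E : Type*} [SeminormedAddCommGroup E] {C : Set E}
    {t r : ℝ} {v w : E} (hw : w ∈ C + closedBall 0 t) (hvw : dist v w ≤ r) :
    v ∈ C + closedBall 0 (t + r) := by
  obtain ⟨c, hc, z, hz, rfl⟩ := hw
  refine ⟨c, hc, v - c, ?_, add_sub_cancel c v⟩
  rw [mem_closedBall_zero_iff] at hz ⊢
  rw [dist_eq_norm] at hvw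
  calc ‖v - c‖ = ‖(v - (c + z)) + z‖ := by rw [sub_add_eq_sub_sub, sub_add_cancel]
    _ ≤ ‖v - (c + z)‖ + ‖z‖ := norm_add_le _ _
    _ ≤ t + r := by linarith

section DeBlasi

variable {E : Type*} [NormedAddCommGroup E] [NormedSpace ℝ E]

lemma isWeaklyCompact_singleton (x : E) : IsWeaklyCompact ({x} : Set E) := by
  rw [IsWeaklyCompact, image_singleton]
  exact isCompact_singleton

lemma IsWeaklyCompact.biUnion {ι : Type*} {s : Set ι} (hs : s.Finite) {C : ι → Set E}
    (hC : ∀ i ∈ s, IsWeaklyCompact (C i)) : IsWeaklyCompact (⋃ i ∈ s, C i) := by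
  rw [IsWeaklyCompact, image_iUnion₂]
  exact hs.isCompact_biUnion hC

lemma deBlasi_nonneg (A : Set E) : 0 ≤ deBlasi A :=
  Real.sInf_nonneg fun _ ht => ht.1.le

lemma deBlasi_le {A C : Set E} {t : ℝ} (hC : IsWeaklyCompact C) (ht : 0 < t)
    (hA : A ⊆ C + closedBall 0 t) : deBlasi A ≤ t :=
  csInf_le ⟨0, fun _ hs => hs.1.le⟩ ⟨ht, C, hC, by rwa [smul_unitClosedBall_of_nonneg ht.le]⟩

lemma exists_isWeaklyCompact_subset_add_closedBall {A : Set E} (hA : IsBounded A) {t : ℝ}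
    (ht : deBlasi A < t) : ∃ C, IsWeaklyCompact C ∧ A ⊆ C + closedBall 0 t := by
  have hne : {s : ℝ | 0 < s ∧ ∃ C : Set E, IsWeaklyCompact C ∧
      A ⊆ C + s • closedBall (0 : E) 1}.Nonempty := by
    obtain ⟨R, hR⟩ := isBounded_iff_forall_norm_le.1 hA
    refine ⟨max R 0 + 1, by positivity, {0}, isWeaklyCompact_singleton 0, fun v hv => ?_⟩
    rw [smul_unitClosedBall_of_nonneg (by positivity), singleton_add]
    exact ⟨v, mem_closedBall_zero_iff.2 ((hR v hv).trans ((le_max_left R 0).trans (by linarith))),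
      zero_add v⟩
  obtain ⟨s, ⟨hs, C, hC, hAC⟩, hst⟩ := exists_lt_of_csInf_lt hne ht
  rw [smul_unitClosedBall_of_nonneg hs.le] at hAC
  exact ⟨C, hC, hAC.trans (add_subset_add_left (closedBall_subset_closedBall hst.le))⟩

lemma deBlasi_mono {A B : Set E} (hAB : A ⊆ B) (hB : IsBounded B) : deBlasi A ≤ deBlasi B := by
  refine le_of_forall_gt_imp_ge_of_dense fun t ht => ?_
  obtain ⟨C, hC, hBC⟩ := exists_isWeaklyCompact_subset_add_closedBall hB ht
  exact deBlasi_le hC ((deBlasi_nonneg B).trans_lt ht) (hAB.trans hBC)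

end DeBlasi

section Ambrosetti

variable {X E : Type*} [NormedAddCommGroup E] [NormedSpace ℝ E]
  {K : Set X} {H : Set (X → E)}

lemma sSup_deBlasi_eval_le (hbdd : IsBounded (image2 (fun h p => h p) H K)) :
    sSup ((fun p => deBlasi ((fun h => h p) '' H)) '' K) ≤
      deBlasi (image2 (fun h p => h p) H K) := by
  refine Real.sSup_le ?_ (deBlasi_nonneg _)
  rintro _ ⟨p, hp, rfl⟩
  exact deBlasi_mono (image_subset_image2_left hp) hbdd

lemma deBlasi_image2_eval_le_sSup [PseudoMetricSpace X] (hK : IsCompact K)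
    (hbdd : IsBounded (image2 (fun h p => h p) H K))
    (hequi : ∀ ε > 0, ∃ δ > 0, ∀ h ∈ H, ∀ p ∈ K, ∀ q ∈ K, dist p q < δ → dist (h p) (h q) < ε) :
    deBlasi (image2 (fun h p => h p) H K) ≤
      sSup ((fun p => deBlasi ((fun h => h p) '' H)) '' K) := by
  set S := sSup ((fun p => deBlasi ((fun h => h p) '' H)) '' K)
  have hS : 0 ≤ S := Real.sSup_nonneg <| by
    rintro _ ⟨p, -, rfl⟩
    exact deBlasi_nonneg _
  have hSbdd : BddAbove ((fun p => deBlasi ((fun h => h p) '' H)) '' K) :=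
    ⟨_, by rintro _ ⟨p, hp, rfl⟩; exact deBlasi_mono (image_subset_image2_left hp) hbdd⟩
  refine le_of_forall_pos_le_add fun ε hε => ?_
  obtain ⟨δ, hδ, hnear⟩ := hequi (ε / 2) (half_pos hε)
  obtain ⟨s, hsK, hs, hKs⟩ := hK.finite_cover_balls hδ
  have hcover : ∀ q ∈ s, ∃ C, IsWeaklyCompact C ∧
      (fun h => h q) '' H ⊆ C + closedBall 0 (S + ε / 2) := fun q hq =>
    exists_isWeaklyCompact_subset_add_closedBall
      (hbdd.subset (image_subset_image2_left (hsK hq)))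
      ((le_csSup hSbdd (mem_image_of_mem _ (hsK hq))).trans_lt (by linarith))
  choose! C hC hHC using hcover
  refine deBlasi_le (IsWeaklyCompact.biUnion hs hC) (by positivity) ?_
  rintro _ ⟨h, hh, p, hp, rfl⟩
  obtain ⟨q, hq, hpq⟩ := mem_iUnion₂.1 (hKs hp)
  have hhp := mem_add_closedBall_of_dist_le (hHC q hq ⟨h, hh, rfl⟩)
    (hnear h hh p hp q (hsK hq) hpq).le
  rw [add_assoc, add_halves] at hhp
  exact add_subset_add_right (subset_biUnion_of_mem (u := C) hq) hhp

theorem deBlasi_image2_eval_eq_sSup [PseudoMetricSpace X] (hK : IsCompact K)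
    (hbdd : IsBounded (image2 (fun h p => h p) H K))
    (hequi : ∀ ε > 0, ∃ δ > 0, ∀ h ∈ H, ∀ p ∈ K, ∀ q ∈ K, dist p q < δ → dist (h p) (h q) < ε) :
    deBlasi (image2 (fun h p => h p) H K) =
      sSup ((fun p => deBlasi ((fun h => h p) '' H)) '' K) :=
  (deBlasi_image2_eval_le_sSup hK hbdd hequi).antisymm (sSup_deBlasi_eval_le hbdd)

end Ambrosetti

theorem ambrosetti_sup_general {E : Type*} [NormedAddCommGroup E] [NormedSpace ℝ E]
    (a b : ℝ)
    (H : Set ((ℝ × ℝ) → E))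
    (hbdd : ∃ M : ℝ, ∀ h ∈ H, ∀ p ∈ Set.Icc 0 a ×ˢ Set.Icc 0 b, ‖h p‖ ≤ M)
    (hequi : ∀ ε > (0:ℝ), ∃ δ > (0:ℝ), ∀ h ∈ H,
      ∀ p ∈ Set.Icc 0 a ×ˢ Set.Icc 0 b, ∀ q ∈ Set.Icc 0 a ×ˢ Set.Icc 0 b,
        ‖p - q‖ < δ → ‖h p - h q‖ < ε) :
    deBlasi {v : E | ∃ h ∈ H, ∃ p ∈ Set.Icc 0 a ×ˢ Set.Icc (0:ℝ) b, h p = v} =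
      sSup {r : ℝ | ∃ p ∈ Set.Icc 0 a ×ˢ Set.Icc (0:ℝ) b,
        r = deBlasi {v : E | ∃ h ∈ H, h p = v}} := by
  have hK : IsCompact (Icc 0 a ×ˢ Icc (0 : ℝ) b) := isCompact_Icc.prod isCompact_Icc
  have hbdd' : IsBounded (image2 (fun h p => h p) H (Icc 0 a ×ˢ Icc (0 : ℝ) b)) := by
    obtain ⟨M, hM⟩ := hbdd
    exact isBounded_iff_forall_norm_le.2 ⟨M, by rintro _ ⟨h, hh, p, hp, rfl⟩; exact hM h hh p hp⟩
  have hsup : {r : ℝ | ∃ p ∈ Icc 0 a ×ˢ Icc (0 : ℝ) b, r = deBlasi {v : E | ∃ h ∈ H, h p = v}} =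
      (fun p => deBlasi ((fun h => h p) '' H)) '' (Icc 0 a ×ˢ Icc (0 : ℝ) b) := by
    ext r
    constructor <;> rintro ⟨p, hp, rfl⟩ <;> exact ⟨p, hp, rfl⟩
  rw [hsup]
  exact deBlasi_image2_eval_eq_sSup hK hbdd' (by simpa only [dist_eq_norm] using hequi)

theorem ambrosetti_sup {E : Type*} [NormedAddCommGroup E] [NormedSpace ℝ E] [CompleteSpace E]
    (a b : ℝ) (ha : 0 < a) (hb : 0 < b)
    (H : Set ((ℝ × ℝ) → E)) (hHne : H.Nonempty)
    (hcont : ∀ h ∈ H, ContinuousOn h (Set.Icc 0 a ×ˢ Set.Icc 0 b))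
    (hbdd : ∃ M : ℝ, ∀ h ∈ H, ∀ p ∈ Set.Icc 0 a ×ˢ Set.Icc 0 b, ‖h p‖ ≤ M)
    (hequi : ∀ ε > (0:ℝ), ∃ δ > (0:ℝ), ∀ h ∈ H,
      ∀ p ∈ Set.Icc 0 a ×ˢ Set.Icc 0 b, ∀ q ∈ Set.Icc 0 a ×ˢ Set.Icc 0 b,
        ‖p - q‖ < δ → ‖h p - h q‖ < ε) :
    deBlasi {v : E | ∃ h ∈ H, ∃ p ∈ Set.Icc 0 a ×ˢ Set.Icc (0:ℝ) b, h p = v} =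
      sSup {r : ℝ | ∃ p ∈ Set.Icc 0 a ×ˢ Set.Icc (0:ℝ) b,
        r = deBlasi {v : E | ∃ h ∈ H, h p = v}} :=
  ambrosetti_sup_general a b H hbdd hequi
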